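/- arXiv:0901.4403 — 3 statements merged into one kernel-verified Lean document; each statement's English description precedes it below -/
import Mathlib

section
/- The canonical contractive linear map ℓ²(ℕ) ⊗̂ ℓ²(ℕ) → ℓ²(ℕ × ℕ) from the projective tensor product, sending e_i ⊗ e_j to e_(i,j), is injective and has dense range but is not an isometric isomorphism: there exists an element of ℓ²(ℕ×ℕ) of norm 1 whose preimages in the projective tensor product all have norm > 1 (indeed the map is not surjective). -/
open scoped TensorProduct BigOperators
open Filter

/-- The projective tensor seminorm on the algebraic tensor product `A ⊗[ℂ] B`;
the projective tensor product `A ⊗̂ B` is the completion of `A ⊗ B` for this norm. -/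
noncomputable def projSeminorm {A B : Type*} [NormedAddCommGroup A] [NormedSpace ℂ A]
    [NormedAddCommGroup B] [NormedSpace ℂ B] (x : A ⊗[ℂ] B) : ℝ :=
  sInf {r : ℝ | ∃ (k : ℕ) (a : Fin k → A) (b : Fin k → B),
    x = ∑ i, a i ⊗ₜ[ℂ] b i ∧ r = ∑ i, ‖a i‖ * ‖b i‖}

/-- `x` is a Cauchy sequence for the projective seminorm; such sequences represent the
points of the completion `A ⊗̂ B`. -/
def ProjCauchy {A B : Type*} [NormedAddCommGroup A] [NormedSpace ℂ A]
    [NormedAddCommGroup B] [NormedSpace ℂ B] (x : ℕ → A ⊗[ℂ] B) : Prop :=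
  ∀ ε : ℝ, 0 < ε → ∃ N, ∀ p q, N ≤ p → N ≤ q → projSeminorm (x p - x q) < ε

local notation "ℓ²ℕ" => lp (fun _ : ℕ => ℂ) 2

open scoped ENNReal

local notation "ℓ²ℕ²" => lp (fun _ : ℕ × ℕ => ℂ) 2

section ProjSeminormLemmas

variable {A B : Type*} [NormedAddCommGroup A] [NormedSpace ℂ A]
    [NormedAddCommGroup B] [NormedSpace ℂ B]

lemma projSet_nonempty (x : A ⊗[ℂ] B) : ∃ (k : ℕ) (a : Fin k → A) (b : Fin k → B),
    x = ∑ i, a i ⊗ₜ[ℂ] b i := by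
  obtain ⟨S, hS⟩ := TensorProduct.exists_finset x
  refine ⟨S.card, fun i => (S.equivFin.symm i).1.1, fun i => (S.equivFin.symm i).1.2, ?_⟩
  rw [hS, ← Finset.sum_coe_sort S (fun i => i.1 ⊗ₜ[ℂ] i.2),
    ← Equiv.sum_comp S.equivFin.symm (fun i => (i.1.1 : A) ⊗ₜ[ℂ] i.1.2)]

lemma projSet_nonempty' (x : A ⊗[ℂ] B) :
    {r : ℝ | ∃ (k : ℕ) (a : Fin k → A) (b : Fin k → B),
      x = ∑ i, a i ⊗ₜ[ℂ] b i ∧ r = ∑ i, ‖a i‖ * ‖b i‖}.Nonempty := by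
  obtain ⟨k, a, b, h⟩ := projSet_nonempty x
  exact ⟨_, k, a, b, h, rfl⟩

lemma projSet_bddBelow (x : A ⊗[ℂ] B) :
    BddBelow {r : ℝ | ∃ (k : ℕ) (a : Fin k → A) (b : Fin k → B),
      x = ∑ i, a i ⊗ₜ[ℂ] b i ∧ r = ∑ i, ‖a i‖ * ‖b i‖} := by
  refine ⟨0, ?_⟩
  rintro r ⟨k, a, b, -, rfl⟩
  exact Finset.sum_nonneg fun i _ => mul_nonneg (norm_nonneg _) (norm_nonneg _)

/-- master bound -/
lemma norm_apply_le_projSeminorm {W : Type*} [SeminormedAddCommGroup W] [NormedSpace ℂ W]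
    (φ : (A ⊗[ℂ] B) →ₗ[ℂ] W) (hφ : ∀ a b, ‖φ (a ⊗ₜ[ℂ] b)‖ ≤ ‖a‖ * ‖b‖) (x : A ⊗[ℂ] B) :
    ‖φ x‖ ≤ projSeminorm x := by
  refine le_csInf (projSet_nonempty' x) ?_
  rintro r ⟨k, a, b, rfl, rfl⟩
  calc ‖φ (∑ i, a i ⊗ₜ[ℂ] b i)‖ = ‖∑ i, φ (a i ⊗ₜ[ℂ] b i)‖ := by rw [map_sum]
    _ ≤ ∑ i, ‖φ (a i ⊗ₜ[ℂ] b i)‖ := norm_sum_le _ _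
    _ ≤ ∑ i, ‖a i‖ * ‖b i‖ := Finset.sum_le_sum fun i _ => hφ _ _

lemma projSeminorm_add_le (u v : A ⊗[ℂ] B) :
    projSeminorm (u + v) ≤ projSeminorm u + projSeminorm v := by
  refine le_of_forall_pos_le_add fun ε hε => ?_
  obtain ⟨r₁, hr₁, hr₁'⟩ := Real.lt_sInf_add_pos (projSet_nonempty' u) (half_pos hε)
  obtain ⟨r₂, hr₂, hr₂'⟩ := Real.lt_sInf_add_pos (projSet_nonempty' v) (half_pos hε)
  obtain ⟨k, a, b, hu, rfl⟩ := hr₁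
  obtain ⟨l, c, d, hv, rfl⟩ := hr₂
  have hmem : (∑ i, ‖a i‖ * ‖b i‖) + (∑ i, ‖c i‖ * ‖d i‖) ∈
      {r : ℝ | ∃ (k : ℕ) (a : Fin k → A) (b : Fin k → B),
        u + v = ∑ i, a i ⊗ₜ[ℂ] b i ∧ r = ∑ i, ‖a i‖ * ‖b i‖} := by
    refine ⟨k + l, Fin.append a c, Fin.append b d, ?_, ?_⟩
    · rw [Fin.sum_univ_add, hu, hv]
      simp [Fin.append_left, Fin.append_right]
    · rw [Fin.sum_univ_add]
      simp [Fin.append_left, Fin.append_right]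
  have := csInf_le (projSet_bddBelow (u + v)) hmem
  calc projSeminorm (u + v) ≤ _ := this
    _ ≤ (projSeminorm u + ε/2) + (projSeminorm v + ε/2) := add_le_add hr₁'.le hr₂'.le
    _ = projSeminorm u + projSeminorm v + ε := by ring

lemma projSeminorm_neg (u : A ⊗[ℂ] B) : projSeminorm (-u) = projSeminorm u := by
  have key : ∀ v : A ⊗[ℂ] B, projSeminorm (-v) ≤ projSeminorm v := by
    intro v
    refine le_csInf (projSet_nonempty' v) ?_
    rintro r ⟨k, a, b, rfl, rfl⟩
    refine csInf_le (projSet_bddBelow _) ⟨k, fun i => -(a i), b, ?_, by simp⟩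
    simp [TensorProduct.neg_tmul, Finset.sum_neg_distrib]
  have h1 := key u
  have h2 := key (-u)
  rw [neg_neg] at h2
  exact le_antisymm h1 h2

lemma projSeminorm_sub_abs (u v : A ⊗[ℂ] B) :
    |projSeminorm u - projSeminorm v| ≤ projSeminorm (u - v) := by
  rw [abs_sub_le_iff]
  constructor
  · have := projSeminorm_add_le (u - v) v
    simpa using this
  · have := projSeminorm_add_le (v - u) u
    have h2 : projSeminorm (v - u) = projSeminorm (u - v) := by
      rw [show v - u = -(u - v) from (neg_sub u v).symm, projSeminorm_neg]
    simp only [sub_add_cancel] at this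
    linarith

end ProjSeminormLemmas

section Jconstruction

lemma memℓp_mul (a b : ℓ²ℕ) : Memℓp (fun q : ℕ × ℕ => a q.1 * b q.2) 2 := by
  apply memℓp_gen
  have ha : Summable fun i => ‖a i‖ ^ (2:ℝ≥0∞).toReal := (lp.memℓp a).summable (by norm_num)
  have hb : Summable fun i => ‖b i‖ ^ (2:ℝ≥0∞).toReal := (lp.memℓp b).summable (by norm_num)
  have := ha.mul_of_nonneg hb (fun i => Real.rpow_nonneg (norm_nonneg _) _)
    (fun i => Real.rpow_nonneg (norm_nonneg _) _)
  refine this.congr fun q => ?_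
  simp [norm_mul, mul_pow, Real.mul_rpow (norm_nonneg _) (norm_nonneg _)]

noncomputable def Jbil : ℓ²ℕ →ₗ[ℂ] ℓ²ℕ →ₗ[ℂ] ℓ²ℕ² where
  toFun a :=
    { toFun := fun b => ⟨fun q => a q.1 * b q.2, memℓp_mul a b⟩
      map_add' := fun b c => lp.ext (funext fun q => by
        simp [lp.coeFn_add, mul_add]; rfl)
      map_smul' := fun r b => lp.ext (funext fun q => by
        simp [lp.coeFn_smul, Pi.smul_apply, smul_eq_mul]; ring) }
  map_add' a a' := by
    ext b q
    simp [lp.coeFn_add, add_mul]; rfl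
  map_smul' r a := by
    ext b q
    simp [lp.coeFn_smul, Pi.smul_apply, smul_eq_mul]; ring

noncomputable def Jmap : (ℓ²ℕ ⊗[ℂ] ℓ²ℕ) →ₗ[ℂ] ℓ²ℕ² := TensorProduct.lift Jbil

lemma Jmap_tmul (a b : ℓ²ℕ) (m n : ℕ) :
    (Jmap (a ⊗ₜ[ℂ] b) : ∀ _ : ℕ × ℕ, ℂ) (m, n) = a m * b n := rfl

/-- evaluation at a point as a linear functional on `lp` -/
noncomputable def evL {α : Type*} (q : α) : lp (fun _ : α => ℂ) 2 →ₗ[ℂ] ℂ where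
  toFun f := f q
  map_add' f g := by simp [lp.coeFn_add]
  map_smul' r f := by simp [lp.coeFn_smul]

lemma evL_cont {α : Type*} (q : α) : Continuous (evL (α := α) q) := by
  refine (LipschitzWith.mk_one fun f g => ?_).continuous
  have h := lp.norm_apply_le_norm (p := (2:ℝ≥0∞)) (by norm_num) (f - g) q
  rw [lp.coeFn_sub] at h
  rw [dist_eq_norm, dist_eq_norm]; exact h

end Jconstruction

section Injectivity

lemma Jmap_injective : Function.Injective Jmap := by
  classical
  rw [injective_iff_map_eq_zero']
  intro x
  constructor
  · intro hx
    set bB := Module.Basis.ofVectorSpace ℂ ℓ²ℕ with hbB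
    set E := (TensorProduct.congr (LinearEquiv.refl ℂ ℓ²ℕ) bB.repr).trans
        (TensorProduct.finsuppScalarRight ℂ ℂ ℓ²ℕ _) with hE
    suffices h : E x = 0 by
      have h2 := congrArg E.symm h
      rw [E.symm_apply_apply, map_zero] at h2
      exact h2
    set F : _ →₀ ℓ²ℕ := E x with hF
    have hxF : x = ∑ i ∈ F.support, (F i) ⊗ₜ[ℂ] (bB i) := by
      have h1 : ∀ i (v : ℓ²ℕ), E (v ⊗ₜ[ℂ] (bB i)) = Finsupp.single i v := by
        intro i v
        ext j
        simp [hE, TensorProduct.finsuppScalarRight_apply_tmul_apply,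
          Finsupp.single_apply, Module.Basis.repr_self]
      have h2 : E (∑ i ∈ F.support, (F i) ⊗ₜ[ℂ] (bB i)) = F := by
        have hms : E (∑ i ∈ F.support, (F i) ⊗ₜ[ℂ] (bB i))
            = ∑ i ∈ F.support, E ((F i) ⊗ₜ[ℂ] (bB i)) := map_sum E.toLinearMap _ _
        rw [hms]
        simp only [h1]
        exact Finsupp.sum_single F
      have h3 := congrArg E.symm h2
      rw [E.symm_apply_apply] at h3
      rw [h3, hF, E.symm_apply_apply]
    have hcoef : ∀ (i) (m : ℕ), (F i : ∀ _:ℕ, ℂ) m = 0 := by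
      intro i m
      have hzero : (∑ j ∈ F.support, ((F j : ∀ _:ℕ, ℂ) m) • bB j : ℓ²ℕ) = 0 := by
        apply lp.ext; funext n
        have h0 : (Jmap x : ∀ _ : ℕ × ℕ, ℂ) (m, n) = 0 := by rw [hx]; simp [lp.coeFn_zero]
        rw [hxF, map_sum, lp.coeFn_sum] at h0
        simp only [Finset.sum_apply] at h0
        rw [Finset.sum_congr rfl (fun j _ => Jmap_tmul (F j) (bB j) m n)] at h0
        rw [lp.coeFn_sum]
        simp only [Finset.sum_apply, lp.coeFn_smul, Pi.smul_apply, smul_eq_mul, lp.coeFn_zero,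
          Pi.zero_apply]
        exact h0
      have hli := bB.linearIndependent
      rw [linearIndependent_iff] at hli
      set G : _ →₀ ℂ :=
        Finsupp.mapRange (fun v : ℓ²ℕ => (v : ∀ _:ℕ, ℂ) m) (by simp [lp.coeFn_zero]) F with hG
      have hGF : Finsupp.linearCombination ℂ bB G = 0 := by
        rw [Finsupp.linearCombination_apply, Finsupp.sum_of_support_subset G
          Finsupp.support_mapRange _ (by intros; simp)]
        rw [← hzero]; exact Finset.sum_congr rfl fun x _ => congrArg (· • bB x) Finsupp.mapRange_apply
      have hG0 := hli G hGF
      have : G i = 0 := by rw [hG0]; rfl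
      exact Finsupp.mapRange_apply.symm.trans this
    ext i n
    rw [hcoef i n]
    simp [lp.coeFn_zero]
  · intro h; rw [h]; simp

end Injectivity

section NormBounds

lemma sum_sq_le (a : ℓ²ℕ) (s : Finset ℕ) :
    ∑ n ∈ s, ‖(a : ∀ _:ℕ, ℂ) n‖ ^ (2:ℕ) ≤ ‖a‖ ^ (2:ℕ) := by
  have h := lp.sum_rpow_le_norm_rpow (p := (2:ℝ≥0∞)) (by norm_num) a s
  have e : ((2:ℝ≥0∞)).toReal = ((2:ℕ):ℝ) := by norm_num
  rw [e] at h
  simpa [Real.rpow_natCast] using h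

lemma cs_bound (a b : ℓ²ℕ) (s : Finset ℕ) :
    ‖∑ n ∈ s, (a : ∀ _:ℕ, ℂ) n * (b : ∀ _:ℕ, ℂ) n‖ ≤ ‖a‖ * ‖b‖ := by
  have h1 : ‖∑ n ∈ s, (a : ∀ _:ℕ, ℂ) n * (b : ∀ _:ℕ, ℂ) n‖
      ≤ ∑ n ∈ s, ‖(a : ∀ _:ℕ, ℂ) n‖ * ‖(b : ∀ _:ℕ, ℂ) n‖ := by
    refine (norm_sum_le _ _).trans ?_
    exact Finset.sum_le_sum fun i _ => le_of_eq (norm_mul _ _)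
  have h2 := Finset.sum_mul_sq_le_sq_mul_sq s (fun n => ‖(a : ∀ _:ℕ, ℂ) n‖)
    (fun n => ‖(b : ∀ _:ℕ, ℂ) n‖)
  have h3 : (∑ n ∈ s, ‖(a : ∀ _:ℕ, ℂ) n‖ * ‖(b : ∀ _:ℕ, ℂ) n‖) ^ (2:ℕ)
      ≤ (‖a‖ * ‖b‖) ^ (2:ℕ) := by
    calc _ ≤ (∑ n ∈ s, ‖(a : ∀ _:ℕ, ℂ) n‖ ^ 2) * (∑ n ∈ s, ‖(b : ∀ _:ℕ, ℂ) n‖ ^ 2) := h2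
      _ ≤ ‖a‖ ^ 2 * ‖b‖ ^ 2 := by
          refine mul_le_mul (sum_sq_le a s) (sum_sq_le b s) ?_ ?_
          · exact Finset.sum_nonneg fun i _ => sq_nonneg _
          · positivity
      _ = (‖a‖ * ‖b‖) ^ 2 := (mul_pow _ _ _).symm
  exact h1.trans ((abs_le_of_sq_le_sq' h3 (by positivity)).2)

lemma norm_mk_le (a b : ℓ²ℕ) (f : ℓ²ℕ²)
    (hf : ∀ q : ℕ × ℕ, (f : ∀ _ : ℕ × ℕ, ℂ) q = a q.1 * b q.2) : ‖f‖ ≤ ‖a‖ * ‖b‖ := by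
  refine lp.norm_le_of_forall_sum_le (by norm_num) (by positivity) fun s => ?_
  have e : ((2:ℝ≥0∞)).toReal = ((2:ℕ):ℝ) := by norm_num
  rw [e]
  simp only [Real.rpow_natCast, hf]
  calc ∑ q ∈ s, ‖a q.1 * b q.2‖ ^ (2:ℕ)
      ≤ ∑ q ∈ (s.image Prod.fst) ×ˢ (s.image Prod.snd), ‖a q.1 * b q.2‖ ^ (2:ℕ) := by
        refine Finset.sum_le_sum_of_subset_of_nonneg ?_ (fun i _ _ => by positivity)
        intro q hq
        exact Finset.mem_product.2 ⟨Finset.mem_image_of_mem _ hq, Finset.mem_image_of_mem _ hq⟩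
    _ = (∑ m ∈ s.image Prod.fst, ‖a m‖ ^ (2:ℕ)) * (∑ n ∈ s.image Prod.snd, ‖b n‖ ^ (2:ℕ)) := by
        rw [Finset.sum_mul_sum]
        rw [Finset.sum_product]
        simp [norm_mul, mul_pow]
    _ ≤ ‖a‖ ^ (2:ℕ) * ‖b‖ ^ (2:ℕ) := by
        refine mul_le_mul (sum_sq_le a _) (sum_sq_le b _) ?_ (by positivity)
        exact Finset.sum_nonneg fun i _ => by positivity
    _ = (‖a‖ * ‖b‖) ^ (2:ℕ) := (mul_pow _ _ _).symm

lemma norm_Jmap_le (x : ℓ²ℕ ⊗[ℂ] ℓ²ℕ) : ‖Jmap x‖ ≤ projSeminorm x := by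
  refine norm_apply_le_projSeminorm Jmap (fun a b => ?_) x
  exact norm_mk_le a b _ (fun q => Jmap_tmul a b q.1 q.2)

end NormBounds

section Density

lemma single_mem_range (q : ℕ × ℕ) (c : ℂ) : lp.single 2 q c ∈ Set.range Jmap := by
  classical
  refine ⟨(lp.single 2 q.1 c) ⊗ₜ[ℂ] (lp.single 2 q.2 1), ?_⟩
  obtain ⟨q1, q2⟩ := q
  apply lp.ext; funext r
  obtain ⟨m, n⟩ := r
  rw [show (Jmap ((lp.single 2 q1 c) ⊗ₜ[ℂ] (lp.single 2 q2 1)) : ∀ _ : ℕ × ℕ, ℂ) (m,n)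
    = (lp.single 2 q1 c : ∀ _:ℕ, ℂ) m * (lp.single 2 q2 1 : ∀ _:ℕ, ℂ) n from Jmap_tmul _ _ _ _]
  by_cases hq : (m, n) = (q1, q2)
  · rw [Prod.mk.injEq] at hq
    obtain ⟨rfl, rfl⟩ := hq
    rw [lp.single_apply_self, lp.single_apply_self, lp.single_apply_self, mul_one]
  · rw [lp.single_apply_ne 2 _ _ hq]
    rw [Prod.mk.injEq, not_and_or] at hq
    rcases hq with h | h
    · rw [lp.single_apply_ne 2 _ _ h, zero_mul]
    · rw [lp.single_apply_ne 2 _ _ h, mul_zero]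

lemma Jmap_denseRange : DenseRange Jmap := by
  intro y
  have hs := lp.hasSum_single (E := fun _ : ℕ × ℕ => ℂ) (p := 2) (by norm_num) y
  refine mem_closure_of_tendsto hs (Filter.Eventually.of_forall fun s => ?_)
  have : ∑ q ∈ s, lp.single 2 q ((y : ∀ _ : ℕ × ℕ, ℂ) q) ∈ LinearMap.range Jmap :=
    Submodule.sum_mem _ fun q _ => single_mem_range q _
  exact this

end Density

section KeyLemma

/-- The diagonal functional bound: the heart of the non-isometry argument. -/
lemma key_lemma (c : ℕ → ℝ) (y : ℓ²ℕ²) (hy : ∀ n : ℕ, (y : ∀ _ : ℕ × ℕ, ℂ) (n, n) = (c n : ℂ))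
    (x : ℕ → ℓ²ℕ ⊗[ℂ] ℓ²ℕ) (hx : ProjCauchy x)
    (hconv : Tendsto (fun k => Jmap (x k)) atTop (nhds y)) :
    ∃ L : ℝ, Tendsto (fun k => projSeminorm (x k)) atTop (nhds L) ∧
      ∀ N : ℕ, |∑ n ∈ Finset.range N, c n| ≤ L := by
  have hcauchy : CauchySeq (fun k => projSeminorm (x k)) := by
    rw [Metric.cauchySeq_iff]
    intro ε hε
    obtain ⟨N, hN⟩ := hx ε hε
    exact ⟨N, fun p hp q hq => lt_of_le_of_lt
      (by rw [Real.dist_eq]; exact projSeminorm_sub_abs (x p) (x q)) (hN p q hp hq)⟩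
  obtain ⟨L, hL⟩ := cauchySeq_tendsto_of_complete hcauchy
  refine ⟨L, hL, fun N => ?_⟩
  -- the truncated diagonal functional
  set Λ : ℓ²ℕ² →ₗ[ℂ] ℂ := ∑ n ∈ Finset.range N, evL ((n, n) : ℕ × ℕ) with hΛ
  have hΛapp : ∀ f : ℓ²ℕ², Λ f = ∑ n ∈ Finset.range N, (f : ∀ _ : ℕ × ℕ, ℂ) (n, n) := by
    intro f
    rw [hΛ, LinearMap.coe_sum, Finset.sum_apply]
    rfl
  have hΛcont : Continuous Λ := by
    have : Continuous fun f : ℓ²ℕ² => ∑ n ∈ Finset.range N, (f : ∀ _ : ℕ × ℕ, ℂ) (n, n) :=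
      continuous_finset_sum _ fun n _ => evL_cont ((n, n) : ℕ × ℕ)
    rw [show (Λ : ℓ²ℕ² → ℂ)
      = fun f : ℓ²ℕ² => ∑ n ∈ Finset.range N, (f : ∀ _ : ℕ × ℕ, ℂ) (n, n) from funext hΛapp]
    exact this
  have hbound : ∀ k, ‖Λ (Jmap (x k))‖ ≤ projSeminorm (x k) := by
    intro k
    refine norm_apply_le_projSeminorm (Λ.comp Jmap) (fun a b => ?_) (x k)
    have : Λ (Jmap (a ⊗ₜ[ℂ] b)) = ∑ n ∈ Finset.range N, (a : ∀ _:ℕ, ℂ) n * (b : ∀ _:ℕ, ℂ) n := by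
      rw [hΛapp]
      exact Finset.sum_congr rfl fun n _ => Jmap_tmul a b n n
    rw [LinearMap.comp_apply, this]
    exact cs_bound a b _
  have htend : Tendsto (fun k => ‖Λ (Jmap (x k))‖) atTop (nhds ‖Λ y‖) :=
    (continuous_norm.comp hΛcont).continuousAt.tendsto.comp hconv
  have hval : ‖Λ y‖ = |∑ n ∈ Finset.range N, c n| := by
    rw [hΛapp]
    rw [Finset.sum_congr rfl fun n _ => hy n]
    rw [← Complex.ofReal_sum]
    exact Complex.norm_real _
  rw [hval] at htend
  exact le_of_tendsto_of_tendsto' htend hL hbound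

end KeyLemma

section Witnesses

noncomputable def sq2 : ℝ := (Real.sqrt 2)⁻¹

lemma memℓp_y5 : Memℓp (fun q : ℕ × ℕ => if q = (0,0) ∨ q = (1,1) then (sq2 : ℂ) else 0) 2 := by
  apply memℓp_gen
  apply summable_of_ne_finset_zero (s := ({(0,0), (1,1)} : Finset (ℕ × ℕ)))
  intro q hq
  have : ¬(q = (0,0) ∨ q = (1,1)) := by
    simpa [Finset.mem_insert, Finset.mem_singleton] using hq
  rw [if_neg this]
  simp [Real.rpow_natCast]

noncomputable def y5 : ℓ²ℕ² := ⟨_, memℓp_y5⟩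

lemma sq2_pos : 0 < sq2 := by
  have := Real.sqrt_pos.2 (by norm_num : (0:ℝ) < 2)
  exact inv_pos.2 this

lemma sq2_sq : sq2 ^ (2:ℕ) = 1/2 := by
  rw [sq2, inv_pow, Real.sq_sqrt (by norm_num : (0:ℝ) ≤ 2)]
  norm_num

lemma norm_y5 : ‖y5‖ = 1 := by
  rw [lp.norm_eq_tsum_rpow (by norm_num) y5]
  have e : ((2:ℝ≥0∞)).toReal = ((2:ℕ):ℝ) := by norm_num
  rw [e]
  have hcoe : ∀ q : ℕ × ℕ, (y5 : ∀ _ : ℕ × ℕ, ℂ) q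
      = if q = (0,0) ∨ q = (1,1) then (sq2 : ℂ) else 0 := fun q => rfl
  have htsum : (∑' q : ℕ × ℕ, ‖(y5 : ∀ _ : ℕ × ℕ, ℂ) q‖ ^ ((2:ℕ):ℝ)) = 1 := by
    rw [tsum_eq_sum (s := ({(0,0), (1,1)} : Finset (ℕ × ℕ)))]
    · have hv : ‖(sq2 : ℂ)‖ ^ ((2:ℕ):ℝ) = 1/2 := by
        rw [Real.rpow_natCast, Complex.norm_real, Real.norm_eq_abs, abs_of_pos sq2_pos, sq2_sq]
      rw [Finset.sum_insert (by norm_num), Finset.sum_singleton, hcoe, hcoe,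
        if_pos (Or.inl rfl), if_pos (Or.inr rfl), hv]
      norm_num
    · intro q hq
      have : ¬(q = (0,0) ∨ q = (1,1)) := by
        simpa [Finset.mem_insert, Finset.mem_singleton] using hq
      rw [hcoe, if_neg this]
      simp [Real.rpow_natCast]
  rw [htsum, Real.one_rpow]

lemma memℓp_y6 : Memℓp (fun q : ℕ × ℕ => if q.1 = q.2 then ((1:ℝ)/(q.1+1) : ℝ) else 0 : ℕ × ℕ → ℂ) 2 := by
  apply memℓp_gen
  have hinj : Function.Injective (fun n : ℕ => ((n, n) : ℕ × ℕ)) := fun a b h => by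
    simpa [Prod.ext_iff] using h
  rw [← Function.Injective.summable_iff hinj ?_]
  · apply Summable.congr (f := fun n : ℕ => ((1:ℝ)/(n+1)) ^ (2:ℕ))
    · have : Summable (fun n : ℕ => ((1:ℝ)/((n:ℝ) + 1)) ^ (2:ℕ)) := by
        have h := (summable_nat_add_iff 1).2 (Real.summable_one_div_nat_pow.2 (le_refl 2))
        refine h.congr fun n => ?_
        push_cast
        rw [div_pow, one_pow]
      exact this
    · intro n
      have e : ((2:ℝ≥0∞)).toReal = ((2:ℕ):ℝ) := by norm_num
      rw [Function.comp_apply, e, Real.rpow_natCast, if_pos rfl, Complex.norm_real,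
        Real.norm_eq_abs, abs_of_pos (by positivity)]
  · intro q hq
    have hq1 : ¬ q.1 = q.2 := fun h => hq ⟨q.1, Prod.ext rfl h⟩
    rw [if_neg hq1]
    simp

noncomputable def y6 : ℓ²ℕ² := ⟨_, memℓp_y6⟩

end Witnesses

/-- The canonical contractive map `ℓ²(ℕ) ⊗̂ ℓ²(ℕ) → ℓ²(ℕ×ℕ)`,
`eᵢ ⊗ eⱼ ↦ e_(i,j)` (induced by `(a,b) ↦ (aᵢbⱼ)`), is injective with dense range but is
not an isometric isomorphism: some `y` of norm `1` has all its preimages in the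
(completed) projective tensor product of norm `> 1`; indeed the extension of the map to
the completion is not surjective. -/
theorem stmt7 :
    ∃ J : (ℓ²ℕ ⊗[ℂ] ℓ²ℕ) →ₗ[ℂ] lp (fun _ : ℕ × ℕ => ℂ) 2,
      (∀ (a b : ℓ²ℕ) (m n : ℕ), (J (a ⊗ₜ[ℂ] b) : Π _ : ℕ × ℕ, ℂ) (m, n) = a m * b n) ∧
      Function.Injective J ∧
      DenseRange J ∧
      (∀ x, ‖J x‖ ≤ projSeminorm x) ∧
      (∃ y : lp (fun _ : ℕ × ℕ => ℂ) 2, ‖y‖ = 1 ∧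
        ∀ x : ℕ → ℓ²ℕ ⊗[ℂ] ℓ²ℕ, ProjCauchy x →
          Tendsto (fun n => J (x n)) atTop (nhds y) →
          ∃ L : ℝ, Tendsto (fun n => projSeminorm (x n)) atTop (nhds L) ∧ 1 < L) ∧
      (∃ y : lp (fun _ : ℕ × ℕ => ℂ) 2,
        ∀ x : ℕ → ℓ²ℕ ⊗[ℂ] ℓ²ℕ, ProjCauchy x →
          ¬ Tendsto (fun n => J (x n)) atTop (nhds y)) := by
  refine ⟨Jmap, Jmap_tmul, Jmap_injective, Jmap_denseRange, norm_Jmap_le, ?_, ?_⟩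
  · -- norm-1 element with big preimages
    refine ⟨y5, norm_y5, fun x hx hconv => ?_⟩
    set c : ℕ → ℝ := fun n => if n = 0 ∨ n = 1 then sq2 else 0 with hc
    have hy : ∀ n : ℕ, (y5 : ∀ _ : ℕ × ℕ, ℂ) (n, n) = (c n : ℂ) := by
      intro n
      show (if ((n,n) : ℕ × ℕ) = (0,0) ∨ ((n,n) : ℕ × ℕ) = (1,1) then (sq2:ℂ) else 0) = _
      have : (((n,n) : ℕ × ℕ) = (0,0) ∨ ((n,n) : ℕ × ℕ) = (1,1)) ↔ (n = 0 ∨ n = 1) := by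
        simp [Prod.ext_iff]
      rw [hc]
      by_cases h : n = 0 ∨ n = 1
      · rw [if_pos (this.2 h)]; simp [h]
      · rw [if_neg (fun hh => h (this.1 hh))]; simp [h]
    obtain ⟨L, hL, hLbound⟩ := key_lemma c y5 hy x hx hconv
    refine ⟨L, hL, ?_⟩
    have h2 := hLbound 2
    have hsum : ∑ n ∈ Finset.range 2, c n = 2 * sq2 := by
      rw [Finset.sum_range_succ, Finset.sum_range_one, hc]
      norm_num
      ring
    rw [hsum, abs_of_pos (by have := sq2_pos; positivity)] at h2
    have hgt : (1:ℝ) < 2 * sq2 := by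
      have hs := Real.sqrt_pos.2 (by norm_num : (0:ℝ) < 2)
      have h4 : Real.sqrt 2 < 2 := by
        nlinarith [Real.sq_sqrt (by norm_num : (0:ℝ) ≤ 2), Real.sqrt_nonneg 2]
      calc (1:ℝ) < 2 / Real.sqrt 2 := (one_lt_div hs).2 h4
        _ = 2 * (Real.sqrt 2)⁻¹ := div_eq_mul_inv _ _
        _ = 2 * sq2 := rfl
    linarith
  · -- non-surjectivity witness
    refine ⟨y6, fun x hx hconv => ?_⟩
    set c : ℕ → ℝ := fun n => (1:ℝ)/(n+1) with hc
    have hy : ∀ n : ℕ, (y6 : ∀ _ : ℕ × ℕ, ℂ) (n, n) = (c n : ℂ) := by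
      intro n
      show (if n = n then (((1:ℝ)/(n+1) : ℝ) : ℂ) else 0) = _
      rw [if_pos rfl, hc]
    obtain ⟨L, hL, hLbound⟩ := key_lemma c y6 hy x hx hconv
    have hdiverge := Real.tendsto_sum_range_one_div_nat_succ_atTop
    obtain ⟨N, hN⟩ := (tendsto_atTop.1 hdiverge (L + 1)).exists
    have hb := hLbound N
    have hpos : (0:ℝ) ≤ ∑ n ∈ Finset.range N, c n :=
      Finset.sum_nonneg fun n _ => by rw [hc]; positivity
    rw [abs_of_nonneg hpos] at hb
    have : ∑ n ∈ Finset.range N, c n = ∑ i ∈ Finset.range N, (1 / ((i:ℝ) + 1) : ℝ) := by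
      exact Finset.sum_congr rfl fun i _ => by simp [hc]
    rw [this] at hb
    linarith
end

section
/- For any index set X and any ℂ-linear subspace V of the topological product ℂ^X (with product topology and subspace topology on V), every continuous ℂ-linear map f : V → ℂ extends to a continuous ℂ-linear map ℂ^X → ℂ. -/
/-- For any index set `X` and any ℂ-linear subspace `V ⊆ ℂ^X` (product
topology; subspace topology on `V`), every continuous ℂ-linear functional on `V` extends
to a continuous ℂ-linear functional on `ℂ^X`. -/
theorem stmt8 (X : Type*) (V : Submodule ℂ (X → ℂ)) (f : V →L[ℂ] ℂ) :
    ∃ g : (X → ℂ) →L[ℂ] ℂ, ∀ v : V, g (v : X → ℂ) = f v := by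
  classical
  have h0 : f ⁻¹' Metric.ball 0 1 ∈ nhds (0 : V) := by
    apply f.continuous.continuousAt.preimage_mem_nhds
    simpa using Metric.ball_mem_nhds (0 : ℂ) one_pos
  rw [nhds_subtype] at h0
  obtain ⟨t, ht, hts⟩ := Filter.mem_comap.mp h0
  rw [nhds_pi] at ht
  obtain ⟨I, hIfin, u, hu, hut⟩ := Filter.mem_pi.mp ht
  have key : ∀ v : V, (∀ i ∈ I, (v : X → ℂ) i = 0) → f v = 0 := by
    intro v hv
    by_contra h
    have hlt : ∀ c : ℂ, ‖c * f v‖ < 1 := by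
      intro c
      have hmem : ((c • v : V) : X → ℂ) ∈ t := by
        apply hut
        intro i hi
        have h1 : ((c • v : V) : X → ℂ) i = 0 := by
          simp [hv i hi]
        rw [h1]
        exact mem_of_mem_nhds (hu i)
      have h2 := hts hmem
      simpa [Metric.mem_ball, dist_eq_norm, map_smul, smul_eq_mul] using h2
    have h2 := hlt (2 / f v)
    rw [div_mul_cancel₀ _ h] at h2
    norm_num at h2
  haveI := hIfin.fintype
  let p : (X → ℂ) →L[ℂ] (↥I → ℂ) :=
    ContinuousLinearMap.pi (fun i : ↥I => ContinuousLinearMap.proj (i : X))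
  let q : V →ₗ[ℂ] (↥I → ℂ) := (p : (X → ℂ) →ₗ[ℂ] (↥I → ℂ)) ∘ₗ V.subtype
  have hker : LinearMap.ker q ≤ LinearMap.ker (f : V →ₗ[ℂ] ℂ) := by
    intro v hv
    simp only [LinearMap.mem_ker] at hv ⊢
    apply key
    intro i hi
    exact congrFun hv ⟨i, hi⟩
  let f' : (V ⧸ LinearMap.ker q) →ₗ[ℂ] ℂ := (LinearMap.ker q).liftQ f hker
  let e := q.quotKerEquivRange
  let h : LinearMap.range q →ₗ[ℂ] ℂ := f' ∘ₗ (e.symm : LinearMap.range q →ₗ[ℂ] _)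
  obtain ⟨H, hH⟩ := h.exists_extend
  let Hc : (↥I → ℂ) →L[ℂ] ℂ := ⟨H, H.continuous_of_finiteDimensional⟩
  refine ⟨Hc.comp p, ?_⟩
  intro v
  have hmem : q v ∈ LinearMap.range q := ⟨v, rfl⟩
  have h1 : Hc (q v) = h ⟨q v, hmem⟩ := LinearMap.congr_fun hH ⟨q v, hmem⟩
  have h2 : e.symm ⟨q v, hmem⟩ = Submodule.Quotient.mk v := by
    rw [LinearEquiv.symm_apply_eq]
    exact Subtype.ext (q.quotKerEquivRange_apply_mk v).symm
  have h3 : h ⟨q v, hmem⟩ = f v := by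
    show f' (e.symm ⟨q v, hmem⟩) = f v
    rw [h2]
    rfl
  show Hc (p (v : X → ℂ)) = f v
  have hpq : p (v : X → ℂ) = q v := rfl
  rw [hpq, h1, h3]
end

section
/- Let V be a topological ℂ-vector space that embeds as a topological ℂ-linear subspace of some power ℂ^X (product topology). Then the canonical evaluation map V → (V', ℂ)' — where V' is the space of continuous linear functionals with the topology of pointwise convergence and (V')' is again continuous functionals with pointwise topology — is a linear topological isomorphism onto its image, and it is bijective. -/
open Topology LinearMap

/-- If a topological ℂ-vector space `V` embeds as a topological ℂ-linear
subspace of a power `ℂ^X`, then the canonical evaluation map `V → V''` (double dual with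
the topology of pointwise convergence, i.e. iterated weak dual) is a bijective linear
topological isomorphism onto its image (linear, inducing, bijective). -/
theorem stmt10 (V : Type*) [AddCommGroup V] [Module ℂ V] [TopologicalSpace V]
    [IsTopologicalAddGroup V] [ContinuousSMul ℂ V]
    (h : ∃ (X : Type) (ι : V →ₗ[ℂ] (X → ℂ)), Function.Injective ι ∧ Topology.IsInducing ι) :
    ∃ J : V →ₗ[ℂ] WeakDual ℂ (WeakDual ℂ V),
      (∀ (v : V) (f : WeakDual ℂ V), J v f = f v) ∧
      Function.Bijective J ∧ Topology.IsInducing J := by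
  obtain ⟨X, ι, hinj, hind⟩ := h
  -- coordinate functionals
  let π : X → WeakDual ℂ V := fun x =>
    ⟨(LinearMap.proj x).comp ι, (continuous_apply x).comp hind.continuous⟩
  -- the evaluation map
  let J : V →ₗ[ℂ] WeakDual ℂ (WeakDual ℂ V) :=
    { toFun := fun v => ⟨(topDualPairing ℂ V).flip v,
        WeakBilin.eval_continuous (topDualPairing ℂ V) v⟩
      map_add' := fun a b => DFunLike.ext _ _ fun f => map_add f a b
      map_smul' := fun c a => DFunLike.ext _ _ fun f => map_smul f c a }
  have hJ : ∀ (v : V) (f : WeakDual ℂ V), J v f = f v := fun _ _ => rfl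
  refine ⟨J, hJ, ⟨?_, ?_⟩, ?_⟩
  · -- injective
    intro a b hab
    apply hinj
    funext x
    have : J a (π x) = J b (π x) := by rw [hab]
    exact this
  · -- surjective
    intro (φ : WeakDual ℂ V →L[ℂ] ℂ)
    have hcont : Continuous φ := φ.2
    have h1 : φ ⁻¹' Metric.ball (0 : ℂ) 1 ∈ 𝓝 (0 : WeakDual ℂ V) := by
      refine (Metric.isOpen_ball.preimage hcont).mem_nhds ?_
      simp [map_zero]
    rcases (LinearMap.hasBasis_weakBilin (topDualPairing ℂ V)).mem_iff.1 h1 with ⟨U, hU, hsub⟩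
    rcases (SeminormFamily.basisSets_iff _).1 hU with ⟨s, r, hr, rfl⟩
    let P : V →ₗ[ℂ] WeakDual ℂ V →ₗ[ℂ] ℂ := (topDualPairing ℂ V).flip
    -- kernel containment
    have hker : ⨅ (v : s), LinearMap.ker (P (v : V)) ≤
        LinearMap.ker (φ.1 : WeakDual ℂ V →ₗ[ℂ] ℂ) := by
      intro f hf
      simp only [Submodule.mem_iInf, LinearMap.mem_ker] at hf
      have hzero : ∀ c : ℂ, ‖c‖ * ‖φ f‖ < 1 := by
        intro c
        have hball : c • f ∈ (s.sup (topDualPairing ℂ V).toSeminormFamily).ball 0 r := by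
          refine (Seminorm.mem_ball_zero (p := s.sup (topDualPairing ℂ V).toSeminormFamily)
            (y := (c • f : V →L[ℂ] ℂ))).2 ?_
          refine Seminorm.finset_sup_apply_lt hr fun v hv => ?_
          have : f (v : V) = 0 := hf ⟨v, hv⟩
          change ‖c • f (v : V)‖ < r
          simp [LinearMap.toSeminormFamily, topDualPairing_apply, this, hr]
        have : φ (c • f) ∈ Metric.ball (0 : ℂ) 1 := hsub hball
        simp only [Set.mem_preimage, Metric.mem_ball, dist_zero_right] at this
        rw [map_smul, smul_eq_mul, norm_mul] at this
        exact this
      rw [LinearMap.mem_ker]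
      by_contra hne
      have hne' : (0 : ℝ) < ‖φ f‖ := by
        simpa [norm_pos_iff] using hne
      have := hzero ((2 / ‖φ f‖ : ℝ) : ℂ)
      rw [Complex.norm_real, Real.norm_eq_abs, abs_of_pos (by positivity),
        div_mul_cancel₀ _ (ne_of_gt hne')] at this
      linarith
    have hmem := mem_span_of_iInf_ker_le_ker
      (L := fun v : s => P (v : V))
      (K := (φ.1 : WeakDual ℂ V →ₗ[ℂ] ℂ)) hker
    have hrange : (φ.1 : WeakDual ℂ V →ₗ[ℂ] ℂ) ∈ LinearMap.range P := by
      refine Submodule.span_le.2 ?_ hmem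
      rintro _ ⟨v, rfl⟩
      exact ⟨(v : V), rfl⟩
    obtain ⟨v, hv⟩ := hrange
    refine ⟨v, ?_⟩
    apply DFunLike.ext
    intro f
    exact LinearMap.congr_fun hv f
  · -- inducing
    have hJcont : Continuous J := by
      apply WeakBilin.continuous_of_continuous_eval
      intro f
      exact f.continuous
    have hPcont : Continuous (fun φ : WeakDual ℂ (WeakDual ℂ V) => fun x : X => φ (π x)) := by
      apply continuous_pi
      intro x
      exact WeakBilin.eval_continuous (topDualPairing ℂ (WeakDual ℂ V)) (π x)
    have hcomp : (fun φ : WeakDual ℂ (WeakDual ℂ V) => fun x : X => φ (π x)) ∘ ⇑J = ⇑ι := by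
      funext v
      rfl
    exact Topology.IsInducing.of_comp hJcont hPcont (hcomp ▸ hind)
end
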